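/- arXiv:1212.0927 — 8 statements merged into one kernel-verified Lean document; each statement's English description precedes it below -/
import Mathlib

section
/- Soundness of the WPDA deduction system: any valid proof of an instantiation q₁ ⤳ q₂ : u in the logic L_M induces a balanced path from q₁ to q₂ in M whose weight is u. -/
/- A WPDA ⟨Σ, Π, Π̂, Q, E, s, f⟩ over a semiring K.  `A` is the input alphabet Σ,
`P` the alphabet of opening parentheses Π (a closing parenthesis `â ∈ Π̂` is
represented as `(true, a)`, an opening one as `(false, a)`), `Q` the states, and `T`
the set of transitions `E`, with source `src e`, label `lab e` (`none` = ε,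
`some (.inl x)` = input symbol, `some (.inr (false, a))` = opening parenthesis,
`some (.inr (true, a))` = closing parenthesis), weight `wt e`, target `dst e`. -/

/-- Paths: sequences of composable transitions. -/
inductive IsPath {Q T : Type*} (src dst : T → Q) : Q → List T → Q → Prop
  | nil (q : Q) : IsPath src dst q [] q
  | cons {q r : Q} {e : T} {es : List T} (h : src e = q)
      (hp : IsPath src dst (dst e) es r) : IsPath src dst q (e :: es) r

/-- The parenthesis written on a label, if any. -/
def parenOf {A P : Type*} : Option (A ⊕ (Bool × P)) → Option (Bool × P)
  | some (Sum.inr x) => some x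
  | _ => none

/-- The subsequence of the label string of a path consisting of its parentheses. -/
def parens {A P T : Type*} (lab : T → Option (A ⊕ (Bool × P))) (π : List T) :
    List (Bool × P) :=
  π.filterMap (fun e => parenOf (lab e))

/-- The Dyck language on Π, Π̂. -/
inductive Dyck {P : Type*} : List (Bool × P) → Prop
  | nil : Dyck []
  | wrap {u : List (Bool × P)} (a : P) (h : Dyck u) :
      Dyck ((false, a) :: u ++ [(true, a)])
  | append {u v : List (Bool × P)} (hu : Dyck u) (hv : Dyck v) : Dyck (u ++ v)

/-- A path is balanced if its parenthesis subsequence is a Dyck word. -/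
def BalancedP {A P T : Type*} (lab : T → Option (A ⊕ (Bool × P))) (π : List T) : Prop :=
  Dyck (parens lab π)

/-- The weight of a path: the ⊗-product of its transition weights, in order. -/
def pweight {T K : Type*} [Semiring K] (wt : T → K) (π : List T) : K :=
  (π.map wt).prod

/-- Entering states: the start state `s`, and targets of opening-parenthesis
transitions. -/
def Entering {Q T A P : Type*} (dst : T → Q) (lab : T → Option (A ⊕ (Bool × P)))
    (s : Q) (q : Q) : Prop :=
  q = s ∨ ∃ (e : T) (a : P), dst e = q ∧ lab e = some (Sum.inr (false, a))

/-- Proofs in the weighted deductive logic L_M describing the execution of the WPDA: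
axioms `q ⤳ q : 1̄` at entering states, the Scan rule, and the Complete rule. -/
inductive Pf {Q T A P K : Type*} [Semiring K] (src dst : T → Q)
    (lab : T → Option (A ⊕ (Bool × P))) (wt : T → K) (s : Q) : Q → Q → K → Type _
  | ax (q : Q) (h : Entering dst lab s q) : Pf src dst lab wt s q q 1
  | scan {q r : Q} {u : K} (pf : Pf src dst lab wt s q r u) (e : T)
      (hsrc : src e = r) (hlab : ∀ x : Bool × P, lab e ≠ some (Sum.inr x)) :
      Pf src dst lab wt s q (dst e) (u * wt e)
  | complete {q r r' : Q} {u₁ u₂ : K} (a : P)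
      (pf₁ : Pf src dst lab wt s q r u₁) (e₁ : T)
      (h₁s : src e₁ = r) (h₁ : lab e₁ = some (Sum.inr (false, a)))
      (pf₂ : Pf src dst lab wt s (dst e₁) r' u₂) (e₂ : T)
      (h₂s : src e₂ = r') (h₂ : lab e₂ = some (Sum.inr (true, a))) :
      Pf src dst lab wt s q (dst e₂) (u₁ * wt e₁ * u₂ * wt e₂)

/-- The path induced by a proof: the transitions appearing in side conditions, read in
left-to-right post-order. -/
def inducedPath {Q T A P K : Type*} [Semiring K] {src dst : T → Q}
    {lab : T → Option (A ⊕ (Bool × P))} {wt : T → K} {s : Q} :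
    ∀ {q₁ q₂ : Q} {u : K}, Pf src dst lab wt s q₁ q₂ u → List T
  | _, _, _, .ax _ _ => []
  | _, _, _, .scan pf e _ _ => inducedPath pf ++ [e]
  | _, _, _, .complete _ pf₁ e₁ _ _ pf₂ e₂ _ _ =>
      inducedPath pf₁ ++ e₁ :: (inducedPath pf₂ ++ [e₂])

theorem IsPath.append {Q T : Type*} {src dst : T → Q} {q r r' : Q} {es es' : List T}
    (h : IsPath src dst q es r) (h' : IsPath src dst r es' r') :
    IsPath src dst q (es ++ es') r' := by
  induction h with
  | nil => exact h'
  | cons hs _ ih => exact .cons hs (ih h')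

theorem parens_append {A P T : Type*} (lab : T → Option (A ⊕ (Bool × P))) (π π' : List T) :
    parens lab (π ++ π') = parens lab π ++ parens lab π' :=
  List.filterMap_append ..

theorem pweight_append {T K : Type*} [Semiring K] (wt : T → K) (π π' : List T) :
    pweight wt (π ++ π') = pweight wt π * pweight wt π' := by
  simp [pweight]

/-- Soundness: any valid proof of an instantiation q₁ ⤳ q₂ : u in L_M
induces a balanced path from q₁ to q₂ in M whose weight is u. -/
theorem soundness {Q T A P K : Type*} [Semiring K] (src dst : T → Q)
    (lab : T → Option (A ⊕ (Bool × P))) (wt : T → K) (s : Q)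
    {q₁ q₂ : Q} {u : K} (pf : Pf src dst lab wt s q₁ q₂ u) :
    IsPath src dst q₁ (inducedPath pf) q₂ ∧
      BalancedP lab (inducedPath pf) ∧
      pweight wt (inducedPath pf) = u := by
  induction pf with
  | ax q h => exact ⟨.nil q, Dyck.nil, by simp [pweight, inducedPath]⟩
  | scan pf e hsrc hlab ih =>
    obtain ⟨hp, hb, hw⟩ := ih
    have hpe : parenOf (lab e) = (none : Option (Bool × P)) := by
      cases hle : lab e with
      | none => rfl
      | some v =>
        cases v with
        | inl x => rfl
        | inr x => exact absurd hle (hlab x)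
    refine ⟨hp.append (.cons hsrc (.nil _)), ?_, ?_⟩
    · simpa [BalancedP, inducedPath, parens_append, parens, hpe] using hb
    · simp [inducedPath, pweight, ← hw]
  | complete a pf₁ e₁ h₁s h₁ pf₂ e₂ h₂s h₂ ih₁ ih₂ =>
    obtain ⟨hp₁, hb₁, hw₁⟩ := ih₁
    obtain ⟨hp₂, hb₂, hw₂⟩ := ih₂
    refine ⟨hp₁.append (.cons h₁s (hp₂.append (.cons h₂s (.nil _)))), ?_, ?_⟩
    · have : parens lab (inducedPath pf₁ ++ e₁ :: (inducedPath pf₂ ++ [e₂]))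
          = parens lab (inducedPath pf₁) ++
            ((false, a) :: (parens lab (inducedPath pf₂) ++ [(true, a)])) := by
        simp [parens_append, parens, parenOf, h₁, h₂]
      unfold BalancedP inducedPath
      rw [this]
      exact Dyck.append hb₁ (Dyck.wrap a hb₂)
    · simp [inducedPath, pweight, ← hw₁, ← hw₂, mul_assoc]
end

section
/- Completeness of the WPDA deduction system: any balanced path from an entering state q₁ to a state q₂ with weight u in a WPDA M has a valid proof of the instantiation q₁ ⤳ q₂ : u in L_M whose induced path is that path. -/
private lemma dyck_concat {P : Type*} {v : List (Bool × P)} (h : Dyck v) :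
    ∀ (w : List (Bool × P)) (b : Bool) (a : P), v = w ++ [(b, a)] →
      b = true ∧ ∃ w₁ w₂, w = w₁ ++ (false, a) :: w₂ ∧ Dyck w₁ ∧ Dyck w₂ := by
  induction h with
  | nil => intro w b a hw; simp at hw
  | @wrap u c hu ihu =>
    intro w b a hw
    have hw' : ((false, c) :: u) ++ [(true, c)] = w ++ [(b, a)] := by simpa using hw
    obtain ⟨h1, h2⟩ := List.append_inj' hw' rfl
    simp only [List.cons.injEq, Prod.mk.injEq] at h2
    obtain ⟨⟨hb, ha⟩, -⟩ := h2
    subst ha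
    exact ⟨hb.symm, [], u, h1.symm, Dyck.nil, hu⟩
  | @append u v hu hv ihu ihv =>
    intro w b a hw
    rcases List.eq_nil_or_concat v with rfl | ⟨v', y, rfl⟩
    · simp only [List.append_nil] at hw
      exact ihu w b a hw
    · rw [List.concat_eq_append, ← List.append_assoc] at hw
      rw [List.concat_eq_append] at ihv
      obtain ⟨h1, h2⟩ := List.append_inj' hw rfl
      simp only [List.cons.injEq] at h2
      obtain ⟨rfl, -⟩ := h2
      obtain ⟨hb, w₁', w₂', hv', hd₁, hd₂⟩ := ihv v' b a rfl
      refine ⟨hb, u ++ w₁', w₂', ?_, Dyck.append hu hd₁, hd₂⟩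
      rw [← h1, hv', List.append_assoc]

private lemma filterMap_split {α β : Type*} {f : α → Option β} :
    ∀ {l : List α} {w₁ w₂ : List β} {x : β},
      l.filterMap f = w₁ ++ x :: w₂ →
      ∃ l₁ e l₂, l = l₁ ++ e :: l₂ ∧ l₁.filterMap f = w₁ ∧ f e = some x ∧
        l₂.filterMap f = w₂ := by
  intro l
  induction l with
  | nil => intro w₁ w₂ x h; simp at h
  | cons a l ih =>
    intro w₁ w₂ x h
    rw [List.filterMap_cons] at h
    cases hfa : f a with
    | none =>
      rw [hfa] at h
      obtain ⟨l₁, e, l₂, rfl, h1, h2, h3⟩ := ih h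
      exact ⟨a :: l₁, e, l₂, rfl, by simp [List.filterMap_cons, hfa, h1], h2, h3⟩
    | some b =>
      rw [hfa] at h
      cases w₁ with
      | nil =>
        simp only [List.nil_append, List.cons.injEq] at h
        exact ⟨[], a, l, rfl, rfl, by rw [hfa, h.1], h.2⟩
      | cons c w₁ =>
        simp only [List.cons_append, List.cons.injEq] at h
        obtain ⟨l₁, e, l₂, rfl, h1, h2, h3⟩ := ih h.2
        exact ⟨a :: l₁, e, l₂, rfl, by simp [List.filterMap_cons, hfa, h1, h.1], h2, h3⟩

private lemma parenOf_eq_some {A P : Type*} {o : Option (A ⊕ (Bool × P))} {x : Bool × P}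
    (h : parenOf o = some x) : o = some (Sum.inr x) := by
  match o with
  | some (Sum.inr y) => simp only [parenOf, Option.some.injEq] at h; rw [h]
  | some (Sum.inl _) => simp [parenOf] at h
  | none => simp [parenOf] at h

private lemma parenOf_eq_none {A P : Type*} {o : Option (A ⊕ (Bool × P))}
    (h : parenOf o = none) : ∀ x : Bool × P, o ≠ some (Sum.inr x) := by
  intro x hx; rw [hx] at h; simp [parenOf] at h

private lemma isPath_append {Q T : Type*} {src dst : T → Q} :
    ∀ {l₁ l₂ : List T} {q r : Q}, IsPath src dst q (l₁ ++ l₂) r →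
      ∃ m, IsPath src dst q l₁ m ∧ IsPath src dst m l₂ r := by
  intro l₁
  induction l₁ with
  | nil => intro l₂ q r h; exact ⟨q, .nil q, h⟩
  | cons e l ih =>
    intro l₂ q r h
    cases h with
    | cons hs hp =>
      obtain ⟨m, h1, h2⟩ := ih hp
      exact ⟨m, .cons hs h1, h2⟩

/-- Completeness: any balanced path from an entering state q₁ to a state
q₂ with weight u has a valid proof of q₁ ⤳ q₂ : u in L_M whose induced path is that
path. -/
theorem completeness {Q T A P K : Type*} [Semiring K] (src dst : T → Q)
    (lab : T → Option (A ⊕ (Bool × P))) (wt : T → K) (s : Q)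
    {q₁ q₂ : Q} {π : List T}
    (hq₁ : Entering dst lab s q₁)
    (hπ : IsPath src dst q₁ π q₂)
    (hb : BalancedP lab π) :
    ∃ pf : Pf src dst lab wt s q₁ q₂ (pweight wt π), inducedPath pf = π := by
  obtain ⟨n, hn⟩ : ∃ n, π.length ≤ n := ⟨π.length, le_refl _⟩
  induction n generalizing q₁ q₂ π with
  | zero =>
    have hnil : π = [] := List.eq_nil_of_length_eq_zero (Nat.le_zero.mp hn)
    subst hnil
    cases hπ
    rw [show pweight wt ([] : List T) = 1 from by simp [pweight]]
    exact ⟨.ax q₁ hq₁, rfl⟩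
  | succ n ih =>
    rcases List.eq_nil_or_concat π with rfl | ⟨π', e, rfl⟩
    · cases hπ
      rw [show pweight wt ([] : List T) = 1 from by simp [pweight]]
      exact ⟨.ax q₁ hq₁, rfl⟩
    · rw [List.concat_eq_append] at hπ hb hn ⊢
      have hn' : π'.length ≤ n := by simp at hn; omega
      obtain ⟨m, hπ', he⟩ := isPath_append hπ
      cases he with
      | cons hs hp =>
        cases hp
        cases hpe : parenOf (lab e) with
        | none =>
          have hb' : BalancedP lab π' := by
            unfold BalancedP parens at hb ⊢
            simpa [List.filterMap_append, List.filterMap_cons, hpe] using hb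
          obtain ⟨pf, hip⟩ := ih hq₁ hπ' hb' hn'
          rw [show pweight wt (π' ++ [e]) = pweight wt π' * wt e from by
            simp [pweight]]
          exact ⟨.scan pf e hs (parenOf_eq_none hpe), by simp [inducedPath, hip]⟩
        | some x =>
          obtain ⟨b, a⟩ := x
          have hbd : Dyck (parens lab π' ++ [(b, a)]) := by
            unfold BalancedP parens at hb
            simpa [parens, List.filterMap_append, List.filterMap_cons, hpe] using hb
          obtain ⟨hb', w₁, w₂, hw, hd₁, hd₂⟩ := dyck_concat hbd _ b a rfl
          subst hb'
          obtain ⟨π₁, e₁, π₂, rfl, hp₁, hpe₁, hp₂⟩ := filterMap_split hw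
          have hlab₁ : lab e₁ = some (Sum.inr (false, a)) := parenOf_eq_some hpe₁
          have hlabe : lab e = some (Sum.inr (true, a)) := parenOf_eq_some hpe
          obtain ⟨m₁, hπ₁, hrest⟩ := isPath_append hπ'
          cases hrest with
          | cons hs₁ hπ₂ =>
            have hl₁ : π₁.length ≤ n := le_trans (by simp) hn'
            have hl₂ : π₂.length ≤ n := le_trans (by simp; omega) hn'
            obtain ⟨pf₁, hip₁⟩ := ih hq₁ hπ₁ (show BalancedP lab π₁ from by
              unfold BalancedP parens; rw [hp₁]; exact hd₁) hl₁
            obtain ⟨pf₂, hip₂⟩ := ih (Or.inr ⟨e₁, a, rfl, hlab₁⟩) hπ₂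
              (show BalancedP lab π₂ from by
                unfold BalancedP parens; rw [hp₂]; exact hd₂) hl₂
            rw [show pweight wt ((π₁ ++ e₁ :: π₂) ++ [e]) =
                pweight wt π₁ * wt e₁ * pweight wt π₂ * wt e from by
              simp [pweight, mul_assoc]]
            exact ⟨.complete a pf₁ e₁ hs₁ hlab₁ pf₂ e hs hlabe,
              by simp [inducedPath, hip₁, hip₂]⟩
end

section
/- There is a bijection between proofs of the goal item s ⤳ f in L_M and accepting paths of the WPDA M, and this bijection preserves weights. -/
namespace WPDAAux

/-- depth of a paren string -/
def depth {P : Type*} (w : List (Bool × P)) : ℤ :=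
  (w.map (fun x => if x.1 then (-1 : ℤ) else 1)).sum

lemma depth_nil {P : Type*} : depth ([] : List (Bool × P)) = 0 := rfl

lemma depth_append {P : Type*} (u v : List (Bool × P)) :
    depth (u ++ v) = depth u + depth v := by
  simp [depth]

lemma depth_cons {P : Type*} (x : Bool × P) (u : List (Bool × P)) :
    depth (x :: u) = (if x.1 then (-1 : ℤ) else 1) + depth u := by
  simp [depth]

lemma prefix_concat' {α : Type*} {p u : List α} {x : α} (h : p <+: u ++ [x]) :
    p <+: u ∨ p = u ++ [x] := by
  obtain ⟨t, ht⟩ := h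
  rcases List.eq_nil_or_concat t with rfl | ⟨t', y, rfl⟩
  · right; simpa using ht
  · left
    rw [List.concat_eq_append, ← List.append_assoc] at ht
    obtain ⟨h1, -⟩ := List.append_inj' ht (by simp)
    exact ⟨t', h1⟩

lemma prefix_append_cases {α : Type*} {p u v : List α} (h : p <+: u ++ v) :
    p <+: u ∨ ∃ p', p = u ++ p' ∧ p' <+: v := by
  induction u generalizing p with
  | nil => exact Or.inr ⟨p, by simpa using h⟩
  | cons a u ih =>
    cases p with
    | nil => exact Or.inl (List.nil_prefix)
    | cons b p =>
      obtain ⟨t, ht⟩ := h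
      simp only [List.cons_append, List.cons.injEq] at ht
      obtain ⟨rfl, ht⟩ := ht
      rcases ih ⟨t, ht⟩ with h1 | ⟨p', rfl, hp'⟩
      · exact Or.inl (List.cons_prefix_cons.mpr ⟨rfl, h1⟩)
      · exact Or.inr ⟨p', rfl, hp'⟩

lemma dyck_depth {P : Type*} {w : List (Bool × P)} (h : Dyck w) :
    depth w = 0 ∧ ∀ p, p <+: w → 0 ≤ depth p := by
  induction h with
  | nil => exact ⟨rfl, by rintro p ⟨t, ht⟩; simp_all [List.nil_eq, depth_nil]⟩
  | wrap a h ih =>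
    obtain ⟨h0, hp⟩ := ih
    constructor
    · simp only [depth] at h0 ⊢
      simp only [List.map_cons, List.map_append, List.sum_cons, List.sum_append]
      simp [h0]
    · intro p hpp
      cases p with
      | nil => simp [depth_nil]
      | cons b p =>
        obtain ⟨rfl, hq⟩ := List.cons_prefix_cons.mp hpp
        rcases prefix_concat' hq with h1 | h2
        · have := hp _ h1
          simp only [depth_cons]
          simp only [Bool.false_eq_true, if_false]
          omega
        · subst h2
          simp only [depth] at h0 ⊢
          simp only [List.map_cons, List.map_append, List.sum_cons, List.sum_append]
          simp [h0]
  | append hu hv ihu ihv =>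
    obtain ⟨hu0, hup⟩ := ihu
    obtain ⟨hv0, hvp⟩ := ihv
    refine ⟨by simp [depth_append, hu0, hv0], ?_⟩
    intro p hpp
    rcases prefix_append_cases hpp with h1 | ⟨p', rfl, hp'⟩
    · exact hup _ h1
    · have := hvp _ hp'
      rw [depth_append, hu0]; omega

lemma dyck_split {P : Type*} {z : List (Bool × P)} (h : Dyck z) :
    ∀ w b, z = w ++ [(true, b)] →
      ∃ u v, w = u ++ (false, b) :: v ∧ Dyck u ∧ Dyck v := by
  induction h with
  | nil => intro w b hw; exact absurd hw (by simp)
  | @wrap u₀ a h ih =>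
    intro w b hw
    have hw' : ((false, a) :: u₀) ++ [(true, a)] = w ++ [(true, b)] := by
      simpa using hw
    obtain ⟨h1, h2⟩ := List.append_inj' hw' (by simp)
    have hb : a = b := by simpa using h2
    subst hb
    exact ⟨[], u₀, by simp [← h1], Dyck.nil, h⟩
  | @append u v hu hv ihu ihv =>
    intro w b hw
    rcases List.eq_nil_or_concat v with rfl | ⟨v', y, rfl⟩
    · exact ihu w b (by simpa using hw)
    · rw [List.concat_eq_append, ← List.append_assoc] at hw
      obtain ⟨h1, h2⟩ := List.append_inj' hw (by simp)
      simp only [List.cons.injEq] at h2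
      obtain ⟨rfl, -⟩ := h2
      obtain ⟨u₂, v₂, rfl, hu₂, hv₂⟩ := ihv v' b List.concat_eq_append
      exact ⟨u ++ u₂, v₂, by rw [← h1]; simp, Dyck.append hu hu₂, hv₂⟩

lemma filterMap_split {α β : Type*} (f : α → Option β) :
    ∀ (l : List α) (u : List β) (x : β) (v : List β), l.filterMap f = u ++ x :: v →
      ∃ l₁ e l₂, l = l₁ ++ e :: l₂ ∧ l₁.filterMap f = u ∧ f e = some x ∧
        l₂.filterMap f = v := by
  intro l
  induction l with
  | nil => intro u x v h; exact absurd h (by simp)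
  | cons a l ih =>
    intro u x v h
    rcases hfa : f a with _ | b
    · rw [List.filterMap_cons_none hfa] at h
      obtain ⟨l₁, e, l₂, rfl, h1, h2, h3⟩ := ih u x v h
      exact ⟨a :: l₁, e, l₂, rfl, by rw [List.filterMap_cons_none hfa]; exact h1, h2, h3⟩
    · rw [List.filterMap_cons_some hfa] at h
      cases u with
      | nil =>
        simp only [List.nil_append, List.cons.injEq] at h
        obtain ⟨rfl, h⟩ := h
        exact ⟨[], a, l, rfl, rfl, hfa, h⟩
      | cons u₀ u' =>
        simp only [List.cons_append, List.cons.injEq] at h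
        obtain ⟨rfl, h⟩ := h
        obtain ⟨l₁, e, l₂, rfl, h1, h2, h3⟩ := ih u' x v h
        exact ⟨a :: l₁, e, l₂, rfl, by rw [List.filterMap_cons_some hfa, h1], h2, h3⟩

end WPDAAux

namespace WPDAAux

section Main

variable {Q T A P K : Type*} [Semiring K]
variable {src dst : T → Q} {lab : T → Option (A ⊕ (Bool × P))} {wt : T → K} {s : Q}

lemma isPath_endpoint : ∀ {q r r' : Q} {π : List T},
    IsPath src dst q π r → IsPath src dst q π r' → r = r' := by
  intro q r r' π h1
  induction h1 generalizing r' with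
  | nil => intro h2; cases h2; rfl
  | cons h hp ih =>
    intro h2
    cases h2 with
    | cons h' hp' => exact ih hp'

lemma isPath_append : ∀ {q m r : Q} {π₁ π₂ : List T},
    IsPath src dst q π₁ m → IsPath src dst m π₂ r → IsPath src dst q (π₁ ++ π₂) r := by
  intro q m r π₁ π₂ h1
  induction h1 with
  | nil => intro h2; simpa using h2
  | cons h hp ih => intro h2; exact .cons h (ih h2)

lemma isPath_append_split : ∀ (π₁ : List T) {q r : Q} {π₂ : List T},
    IsPath src dst q (π₁ ++ π₂) r → ∃ m, IsPath src dst q π₁ m ∧ IsPath src dst m π₂ r := by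
  intro π₁
  induction π₁ with
  | nil => intro q r π₂ h; exact ⟨q, .nil q, by simpa using h⟩
  | cons e es ih =>
    intro q r π₂ h
    cases h with
    | cons h hp =>
      obtain ⟨m, h1, h2⟩ := ih hp
      exact ⟨m, .cons h h1, h2⟩

lemma parens_append (u v : List T) :
    parens lab (u ++ v) = parens lab u ++ parens lab v := by
  simp [parens]

lemma parenOf_lab_none {e : T} (h : ∀ x : Bool × P, lab e ≠ some (Sum.inr x)) :
    parenOf (lab e) = none := by
  rcases hl : lab e with _ | (x | x)
  · rfl
  · rfl
  · exact absurd hl (h x)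

lemma parenOf_eq_some {o : Option (A ⊕ (Bool × P))} {x : Bool × P}
    (h : parenOf o = some x) : o = some (Sum.inr x) := by
  rcases o with _ | (y | y) <;> simp [parenOf] at h <;> simp [h]

lemma parens_cons_none {e : T} (h : parenOf (lab e) = none) (l : List T) :
    parens lab (e :: l) = parens lab l := by
  simp [parens, List.filterMap_cons, h]

lemma parens_cons_some {e : T} {x : Bool × P} (h : parenOf (lab e) = some x) (l : List T) :
    parens lab (e :: l) = x :: parens lab l := by
  simp [parens, List.filterMap_cons, h]

lemma pf_isPath : ∀ {q r : Q} {u : K} (pf : Pf src dst lab wt s q r u),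
    IsPath src dst q (inducedPath pf) r := by
  intro q r u pf
  induction pf with
  | ax q h => exact .nil q
  | scan pf e hsrc hlab ih =>
    exact isPath_append ih (.cons hsrc (.nil _))
  | complete a pf₁ e₁ h₁s h₁ pf₂ e₂ h₂s h₂ ih₁ ih₂ =>
    exact isPath_append ih₁ (.cons h₁s (isPath_append ih₂ (.cons h₂s (.nil _))))

lemma pf_dyck : ∀ {q r : Q} {u : K} (pf : Pf src dst lab wt s q r u),
    Dyck (parens lab (inducedPath pf)) := by
  intro q r u pf
  induction pf with
  | ax q h => exact Dyck.nil
  | scan pf e hsrc hlab ih =>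
    show Dyck (parens lab (inducedPath pf ++ [e]))
    rw [parens_append, parens_cons_none (parenOf_lab_none hlab)]
    simpa [parens] using ih
  | complete a pf₁ e₁ h₁s h₁ pf₂ e₂ h₂s h₂ ih₁ ih₂ =>
    show Dyck (parens lab (inducedPath pf₁ ++ e₁ :: (inducedPath pf₂ ++ [e₂])))
    rw [parens_append, parens_cons_some (x := (false, a)) (by rw [h₁]; rfl),
      parens_append, parens_cons_some (x := (true, a)) (by rw [h₂]; rfl)]
    have : parens lab ([] : List T) = [] := rfl
    rw [this]
    exact Dyck.append ih₁ (Dyck.wrap a ih₂)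

lemma pf_weight : ∀ {q r : Q} {u : K} (pf : Pf src dst lab wt s q r u),
    pweight wt (inducedPath pf) = u := by
  intro q r u pf
  induction pf with
  | ax q h => rfl
  | scan pf e hsrc hlab ih =>
    show pweight wt (inducedPath pf ++ [e]) = _
    simp [pweight] at ih ⊢
    rw [ih]
  | complete a pf₁ e₁ h₁s h₁ pf₂ e₂ h₂s h₂ ih₁ ih₂ =>
    show pweight wt (inducedPath pf₁ ++ e₁ :: (inducedPath pf₂ ++ [e₂])) = _
    simp [pweight] at ih₁ ih₂ ⊢
    rw [ih₁, ih₂, mul_assoc, mul_assoc]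

lemma split_unique {x x' y y' : List T} {e e' : T} {a a' : P}
    (h : x ++ e :: y = x' ++ e' :: y')
    (he : lab e = some (Sum.inr (false, a))) (he' : lab e' = some (Sum.inr (false, a')))
    (hx : Dyck (parens lab x)) (hx' : Dyck (parens lab x'))
    (hy : Dyck (parens lab y)) (hy' : Dyck (parens lab y')) :
    x = x' ∧ e = e' ∧ y = y' := by
  rcases List.append_eq_append_iff.mp h with ⟨c, hc1, hc2⟩ | ⟨c, hc1, hc2⟩
  · cases c with
    | nil =>
      simp only [List.nil_append] at hc2
      injection hc2 with h1 h2
      subst h1; subst h2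
      exact ⟨by simpa using hc1.symm, rfl, rfl⟩
    | cons c0 cw =>
      exfalso
      simp only [List.cons_append, List.cons.injEq] at hc2
      obtain ⟨rfl, rfl⟩ := hc2
      have h0' : depth (parens lab x') = 0 := (dyck_depth hx').1
      have h0 : depth (parens lab x) = 0 := (dyck_depth hx).1
      rw [hc1, parens_append, parens_cons_some (x := (false, a)) (by rw [he]; rfl)] at h0'
      rw [depth_append, depth_cons, h0] at h0'
      have hpre : parens lab cw <+: parens lab (cw ++ e' :: y') := by
        rw [parens_append]; exact ⟨_, rfl⟩
      have := (dyck_depth hy).2 _ hpre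
      simp at h0'
      omega
  · cases c with
    | nil =>
      simp only [List.nil_append] at hc2
      injection hc2 with h1 h2
      subst h1; subst h2
      exact ⟨by simpa using hc1, rfl, rfl⟩
    | cons c0 cw =>
      exfalso
      simp only [List.cons_append, List.cons.injEq] at hc2
      obtain ⟨rfl, rfl⟩ := hc2
      have h0' : depth (parens lab x) = 0 := (dyck_depth hx).1
      have h0 : depth (parens lab x') = 0 := (dyck_depth hx').1
      rw [hc1, parens_append, parens_cons_some (x := (false, a')) (by rw [he']; rfl)] at h0'
      rw [depth_append, depth_cons, h0] at h0'
      have hpre : parens lab cw <+: parens lab (cw ++ e :: y) := by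
        rw [parens_append]; exact ⟨_, rfl⟩
      have := (dyck_depth hy').2 _ hpre
      simp at h0'
      omega

lemma pf_inj : ∀ {q r : Q} {u : K} (pf : Pf src dst lab wt s q r u) {r' : Q} {u' : K}
    (pf' : Pf src dst lab wt s q r' u'),
    inducedPath pf = inducedPath pf' → r = r' ∧ u = u' ∧ HEq pf pf' := by
  intro q r u pf
  induction pf with
  | ax q h =>
    intro r' u' pf' hip
    cases pf' with
    | ax _ h' => exact ⟨rfl, rfl, HEq.rfl⟩
    | scan p e hs hl => exact absurd hip.symm (by simp [inducedPath])
    | complete a p₁ e₁ h1s h1l p₂ e₂ h2s h2l => exact absurd hip.symm (by simp [inducedPath])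
  | scan p e hs hl ih =>
    intro r' u' pf' hip
    cases pf' with
    | ax _ h' => exact absurd hip (by simp [inducedPath])
    | scan p' e' hs' hl' =>
      simp only [inducedPath] at hip
      obtain ⟨hip1, he⟩ := List.append_inj' hip rfl
      injection he with he
      subst he
      have hr : _ = _ := hs.symm.trans hs'
      subst hr
      obtain ⟨-, rfl, hh⟩ := ih p' hip1
      have := eq_of_heq hh
      subst this
      exact ⟨rfl, rfl, HEq.rfl⟩
    | complete a p₁ e₁ h1s h1l p₂ e₂ h2s h2l =>
      simp only [inducedPath] at hip
      have h2 : inducedPath p ++ [e] =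
          (inducedPath p₁ ++ e₁ :: inducedPath p₂) ++ [e₂] := by simpa using hip
      obtain ⟨-, he⟩ := List.append_inj' h2 rfl
      injection he with he
      subst he
      exact absurd h2l (hl _)
  | complete a pf₁ e₁ h1s h1l pf₂ e₂ h2s h2l ih₁ ih₂ =>
    intro r' u' pf' hip
    cases pf' with
    | ax _ h' => exact absurd hip (by simp [inducedPath])
    | scan p' e' hs' hl' =>
      simp only [inducedPath] at hip
      have hh2 : (inducedPath pf₁ ++ e₁ :: inducedPath pf₂) ++ [e₂] =
          inducedPath p' ++ [e'] := by simpa using hip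
      obtain ⟨-, he⟩ := List.append_inj' hh2 rfl
      injection he with he
      subst he
      exact absurd h2l (hl' _)
    | complete a' p₁' e₁' h1s' h1l' p₂' e₂' h2s' h2l' =>
      simp only [inducedPath] at hip
      have hh2 : (inducedPath pf₁ ++ e₁ :: inducedPath pf₂) ++ [e₂] =
          (inducedPath p₁' ++ e₁' :: inducedPath p₂') ++ [e₂'] := by simpa using hip
      obtain ⟨hmid, he⟩ := List.append_inj' hh2 rfl
      injection he with he
      subst he
      obtain ⟨hx, hee, hyy⟩ := split_unique hmid h1l h1l'
        (pf_dyck pf₁) (pf_dyck p₁') (pf_dyck pf₂) (pf_dyck p₂')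
      subst hee
      have ha : a = a' := by
        have := h1l.symm.trans h1l'
        simpa using this
      subst ha
      have hr : _ = _ := h1s.symm.trans h1s'
      subst hr
      obtain ⟨-, rfl, hh₁⟩ := ih₁ p₁' hx
      have := eq_of_heq hh₁
      subst this
      have hr2 : _ = _ := h2s.symm.trans h2s'
      subst hr2
      obtain ⟨-, rfl, hh₂⟩ := ih₂ p₂' hyy
      have := eq_of_heq hh₂
      subst this
      exact ⟨rfl, rfl, HEq.rfl⟩

lemma pf_surj : ∀ (n : ℕ) (π : List T), π.length ≤ n → ∀ {q r : Q},
    Entering dst lab s q → IsPath src dst q π r → Dyck (parens lab π) →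
    ∃ p : Σ u : K, Pf src dst lab wt s q r u, inducedPath p.2 = π := by
  intro n
  induction n with
  | zero =>
    intro π hlen q r hq hpath hd
    have : π = [] := List.length_eq_zero_iff.mp (Nat.le_zero.mp hlen)
    subst this
    cases hpath
    exact ⟨⟨1, .ax q hq⟩, rfl⟩
  | succ n ih =>
    intro π hlen q r hq hpath hd
    rcases List.eq_nil_or_concat π with rfl | ⟨π', e, rfl⟩
    · cases hpath
      exact ⟨⟨1, .ax q hq⟩, rfl⟩
    · rw [List.concat_eq_append] at hlen hpath hd ⊢
      obtain ⟨m, hp1, hp2⟩ := isPath_append_split π' hpath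
      cases hp2 with
      | cons hsrc hp2' =>
      cases hp2'
      have hlen' : π'.length ≤ n := by simp [List.length_append] at hlen; omega
      rcases hpar : parenOf (lab e) with _ | ⟨b, a⟩
      · -- not a parenthesis : Scan
        rw [parens_append, parens_cons_none hpar] at hd
        have hd2 : Dyck (parens lab π') := by simpa [parens] using hd
        obtain ⟨⟨u, pf⟩, hipeq⟩ := ih π' hlen' hq hp1 hd2
        have hlab : ∀ x : Bool × P, lab e ≠ some (Sum.inr x) := by
          intro x hx
          rw [hx] at hpar
          exact absurd hpar (by simp [parenOf])
        exact ⟨⟨u * wt e, .scan pf e hsrc hlab⟩, by simp [inducedPath, hipeq]⟩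
      · cases b
        · -- trailing opening parenthesis : impossible
          exfalso
          rw [parens_append, parens_cons_some hpar] at hd
          have hd2 : Dyck (parens lab π' ++ [(false, a)]) := by simpa [parens] using hd
          obtain ⟨h0, hpre⟩ := dyck_depth hd2
          have h1 := hpre (parens lab π') ⟨_, rfl⟩
          rw [depth_append] at h0
          have hone : depth [((false : Bool), a)] = 1 := by simp [depth]
          rw [hone] at h0
          omega
        · -- trailing closing parenthesis : Complete
          rw [parens_append, parens_cons_some hpar] at hd
          have hd' : Dyck (parens lab π' ++ [(true, a)]) := by simpa [parens] using hd
          obtain ⟨U, V, hUV, hU, hV⟩ := dyck_split hd' _ _ rfl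
          obtain ⟨l₁, e₁, l₂, rfl, hfl₁, hfe₁, hfl₂⟩ :=
            filterMap_split _ π' U (false, a) V hUV
          have hlabe₁ : lab e₁ = some (Sum.inr (false, a)) := parenOf_eq_some hfe₁
          have hlabe : lab e = some (Sum.inr (true, a)) := parenOf_eq_some hpar
          obtain ⟨m₁, hq1, hq2⟩ := isPath_append_split l₁ hp1
          cases hq2 with
          | cons hsrc₁ hq2' =>
          have hlen₁ : l₁.length ≤ n := by simp at hlen'; omega
          have hlen₂ : l₂.length ≤ n := by simp at hlen'; omega
          have hU' : Dyck (parens lab l₁) := by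
            show Dyck (List.filterMap (fun e => parenOf (lab e)) l₁)
            rw [hfl₁]; exact hU
          have hV' : Dyck (parens lab l₂) := by
            show Dyck (List.filterMap (fun e => parenOf (lab e)) l₂)
            rw [hfl₂]; exact hV
          obtain ⟨⟨u₁, pf₁⟩, hip₁⟩ := ih l₁ hlen₁ hq hq1 hU'
          obtain ⟨⟨u₂, pf₂⟩, hip₂⟩ := ih l₂ hlen₂
            (Or.inr ⟨e₁, a, rfl, hlabe₁⟩) hq2' hV'
          exact ⟨⟨u₁ * wt e₁ * u₂ * wt e, .complete a pf₁ e₁ hsrc₁ hlabe₁ pf₂ e hsrc hlabe⟩,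
            by simp [inducedPath, hip₁, hip₂]⟩

end Main

end WPDAAux

/-- there is a weight-preserving bijection between proofs of the goal
item s ⤳ f in L_M and accepting paths (balanced paths from s to f) of the WPDA M,
given by sending a proof to its induced path. -/
theorem proofs_equiv_accepting_paths {Q T A P K : Type*} [Semiring K]
    (src dst : T → Q) (lab : T → Option (A ⊕ (Bool × P))) (wt : T → K) (s f : Q) :
    ∃ φ : (Σ u : K, Pf src dst lab wt s s f u) ≃
        {π : List T // IsPath src dst s π f ∧ BalancedP lab π},
      ∀ p, (φ p).val = inducedPath p.2 ∧ pweight wt (φ p).val = p.1 := by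
  classical
  let ψ : (Σ u : K, Pf src dst lab wt s s f u) →
      {π : List T // IsPath src dst s π f ∧ BalancedP lab π} :=
    fun p => ⟨inducedPath p.2, WPDAAux.pf_isPath p.2, WPDAAux.pf_dyck p.2⟩
  have hinj : Function.Injective ψ := by
    rintro ⟨u, pf⟩ ⟨u', pf'⟩ h
    obtain ⟨-, h2, h3⟩ := WPDAAux.pf_inj pf pf' (congrArg Subtype.val h)
    cases h2
    cases eq_of_heq h3
    rfl
  have hsurj : Function.Surjective ψ := by
    rintro ⟨π, hp, hb⟩
    obtain ⟨p, hip⟩ := WPDAAux.pf_surj (wt := wt) π.length π le_rfl (Or.inl rfl) hp hb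
    exact ⟨p, Subtype.ext hip⟩
  exact ⟨Equiv.ofBijective ψ ⟨hinj, hsurj⟩, fun p => ⟨rfl, WPDAAux.pf_weight p.2⟩⟩
end

section
/- In the generalized A* search over a weighted deduction system with a monotonic heuristic H over a semiring with the path property, instantiations are popped from the priority queue in non-decreasing order of their H value. -/
/-- in generalized A* search over a weighted deduction system with a
monotonic heuristic H, over a semiring with the path property, instantiations are
popped in non-decreasing order of their H value (with respect to the natural ordering
`a ≤ b ↔ a ⊕ b = a`).

The run of the algorithm is modelled by the sequence `pop n` of popped instantiations
and the queue contents `queue n` before the n-th pop: the popped element is a minimum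
of the queue under the H-keyed natural order, and every element of the next queue was
either already in the queue or is newly derivable by an inference rule whose
antecedents have all been popped, among them the element just popped; monotonicity of
H says that H of every antecedent is ≤ H of the conclusion of each rule application. -/
theorem generalized_astar_pops_in_order {K ι : Type*} [Semiring K]
    (hpath : ∀ a b : K, a + b = a ∨ a + b = b)
    (H : ι → K)
    (Derives : List ι → ι → Prop)
    (hmono : ∀ as b, Derives as b → ∀ a ∈ as, H a + H b = H a)
    (pop : ℕ → ι) (queue : ℕ → Set ι)
    (hmem : ∀ n, pop n ∈ queue n)
    (hmin : ∀ n, ∀ x ∈ queue n, H (pop n) + H x = H (pop n))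
    (hstep : ∀ n, ∀ x ∈ queue (n + 1),
      x ∈ queue n ∨
        ∃ as, Derives as x ∧ pop n ∈ as ∧ ∀ a ∈ as, ∃ m ≤ n, pop m = a) :
    ∀ m n, m ≤ n → H (pop m) + H (pop n) = H (pop m) := by
  have step : ∀ n, H (pop n) + H (pop (n + 1)) = H (pop n) := by
    intro n
    rcases hstep n (pop (n + 1)) (hmem (n + 1)) with h | ⟨as, hd, hpn, _⟩
    · exact hmin n _ h
    · exact hmono as _ hd _ hpn
  intro m n hmn
  induction n with
  | zero =>
    obtain rfl := Nat.le_zero.mp hmn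
    rcases hpath (H (pop 0)) (H (pop 0)) with h | h <;> exact h
  | succ n ih =>
    rcases Nat.lt_or_ge m (n + 1) with h | h
    · have h1 := ih (Nat.lt_succ_iff.mp h)
      calc H (pop m) + H (pop (n + 1))
          = (H (pop m) + H (pop n)) + H (pop (n + 1)) := by rw [h1]
        _ = H (pop m) + (H (pop n) + H (pop (n + 1))) := add_assoc _ _ _
        _ = H (pop m) + H (pop n) := by rw [step n]
        _ = H (pop m) := h1
    · obtain rfl : m = n + 1 := le_antisymm hmn h
      rcases hpath (H (pop (n + 1))) (H (pop (n + 1))) with h | h <;> exact h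
end

section
/- In generalized A* search with a monotonic and admissible heuristic over a semiring with the path property, instantiations of the goal item are popped in non-decreasing order of their weights; hence the first k goal instantiations popped are k smallest-weight ones. -/
/-- in generalized A* search with a monotonic and admissible heuristic
over a semiring with the path property, goal instantiations are popped in
non-decreasing order of their weights; hence (given that every goal instantiation is
eventually popped) the first k goal instantiations popped are k smallest-weight ones.

The run is modelled as in the generalized A* algorithm: `pop n` is the instantiation
popped at step n from queue `queue n`, popped elements are minimal in the H-keyed
natural order `a ≤ b ↔ a ⊕ b = a`, new queue elements are derived from the popped
element together with previously popped ones, H is monotonic over rule applications,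
and H agrees with the weight `w` on goal instantiations (admissibility). -/
theorem generalized_astar_goals_in_weight_order {K ι : Type*} [Semiring K]
    (hpath : ∀ a b : K, a + b = a ∨ a + b = b)
    (H w : ι → K) (Goal : ι → Prop)
    (Derives : List ι → ι → Prop)
    (hmono : ∀ as b, Derives as b → ∀ a ∈ as, H a + H b = H a)
    (hadm : ∀ x, Goal x → H x = w x)
    (pop : ℕ → ι) (queue : ℕ → Set ι)
    (hmem : ∀ n, pop n ∈ queue n)
    (hmin : ∀ n, ∀ x ∈ queue n, H (pop n) + H x = H (pop n))
    (hstep : ∀ n, ∀ x ∈ queue (n + 1),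
      x ∈ queue n ∨
        ∃ as, Derives as x ∧ pop n ∈ as ∧ ∀ a ∈ as, ∃ m ≤ n, pop m = a)
    (hcompl : ∀ x, Goal x → ∃ n, pop n = x) :
    (∀ m n, m ≤ n → Goal (pop m) → Goal (pop n) →
        w (pop m) + w (pop n) = w (pop m)) ∧
    (∀ n, Goal (pop n) → ∀ x, Goal x → (∀ m ≤ n, pop m ≠ x) →
        w (pop n) + w x = w (pop n)) := by
  have idem : ∀ a : K, a + a = a := fun a => (hpath a a).elim id id
  have key : ∀ m n, m ≤ n → H (pop m) + H (pop n) = H (pop m) := by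
    intro m n hmn
    induction n with
    | zero => interval_cases m; exact idem _
    | succ n ih =>
      rcases Nat.lt_succ_iff_lt_or_eq.mp (Nat.lt_succ_of_le hmn) with h | h
      · have h1 := ih (Nat.lt_succ_iff.mp h)
        have h2 : H (pop n) + H (pop (n + 1)) = H (pop n) := by
          rcases hstep n (pop (n+1)) (hmem (n+1)) with hq | ⟨as, hd, hpn, _⟩
          · exact hmin n _ hq
          · exact hmono as _ hd _ hpn
        calc H (pop m) + H (pop (n+1)) = H (pop m) + H (pop n) + H (pop (n+1)) := by
              rw [h1]
          _ = H (pop m) + (H (pop n) + H (pop (n+1))) := by rw [add_assoc]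
          _ = H (pop m) + H (pop n) := by rw [h2]
          _ = H (pop m) := h1
      · subst h; exact idem _
  have part1 : ∀ m n, m ≤ n → Goal (pop m) → Goal (pop n) →
      w (pop m) + w (pop n) = w (pop m) := by
    intro m n hmn gm gn
    rw [← hadm _ gm, ← hadm _ gn]; exact key m n hmn
  refine ⟨part1, ?_⟩
  intro n gn x gx hne
  obtain ⟨k, hk⟩ := hcompl x gx
  have hnk : n ≤ k := by
    by_contra h
    exact hne k (le_of_not_ge h) hk
  rw [← hk]; exact part1 n k hnk gn (hk ▸ gx)
end

section
/- Given two non-decreasing sequences A and B of real numbers, the lazy k-best merge algorithm (starting from index pair (1,1) and, upon popping (i,j), pushing (i+1,j) and (i,j+1) if not present) outputs pairs in non-decreasing order of A_i + B_j, and its first k outputs are k pairs with the smallest sums in A × B. -/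
/-- given two non-decreasing real sequences A and B, the lazy k-best
merge algorithm — start with the index pair (1,1) in a min-priority queue keyed by
A_i + B_j, and upon popping (i,j) push (i+1,j) and (i,j+1) if not present — outputs
pairs in non-decreasing order of A_i + B_j, and its first k outputs are k pairs with
the smallest sums among all pairs (with indices ≥ 1).

The run is modelled by the popped sequence `pop n` and queue contents `queue n`:
`queue 0 = {(1,1)}`, the popped pair is a minimum of the queue, and the next queue is
the old queue without the popped pair together with its two successors. -/
theorem lazy_kbest_merge {A B : ℕ → ℝ}
    (hA : Monotone A) (hB : Monotone B)
    (pop : ℕ → ℕ × ℕ) (queue : ℕ → Set (ℕ × ℕ))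
    (h0 : queue 0 = {(1, 1)})
    (hmem : ∀ n, pop n ∈ queue n)
    (hmin : ∀ n, ∀ p ∈ queue n,
      A (pop n).1 + B (pop n).2 ≤ A p.1 + B p.2)
    (hstep : ∀ n, queue (n + 1) =
      (queue n \ {pop n}) ∪
        {((pop n).1 + 1, (pop n).2), ((pop n).1, (pop n).2 + 1)}) :
    (∀ m n, m ≤ n → A (pop m).1 + B (pop m).2 ≤ A (pop n).1 + B (pop n).2) ∧
    (∀ n, ∀ i j : ℕ, 1 ≤ i → 1 ≤ j → (∀ m ≤ n, pop m ≠ (i, j)) →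
      A (pop n).1 + B (pop n).2 ≤ A i + B j) := by

  have step1 : ∀ n, A (pop n).1 + B (pop n).2 ≤ A (pop (n+1)).1 + B (pop (n+1)).2 := by
    intro n
    have h := hmem (n+1)
    rw [hstep n] at h
    rcases h with ⟨h, -⟩ | h
    · exact hmin n _ h
    · rcases h with h | h <;> rw [h] <;> simp <;>
        [exact hA (Nat.le_succ _); exact hB (Nat.le_succ _)]
  have key : ∀ n, ∀ i j : ℕ, 1 ≤ i → 1 ≤ j →
      (∃ m < n, pop m = (i, j)) ∨ (∃ p ∈ queue n, p.1 ≤ i ∧ p.2 ≤ j) := by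
    intro n
    induction n with
    | zero =>
      intro i j hi hj
      exact Or.inr ⟨(1, 1), by rw [h0]; rfl, hi, hj⟩
    | succ n ih =>
      intro i j hi hj
      rcases ih i j hi hj with ⟨m, hm, hpm⟩ | ⟨p, hp, h1, h2⟩
      · exact Or.inl ⟨m, Nat.lt_succ_of_lt hm, hpm⟩
      · by_cases hpe : p = pop n
        · by_cases hij : pop n = (i, j)
          · exact Or.inl ⟨n, Nat.lt_succ_self n, hij⟩
          · subst hpe
            rcases lt_or_eq_of_le h1 with h1' | h1'
            · refine Or.inr ⟨((pop n).1 + 1, (pop n).2), ?_, h1', h2⟩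
              rw [hstep n]; right; left; rfl
            · rcases lt_or_eq_of_le h2 with h2' | h2'
              · refine Or.inr ⟨((pop n).1, (pop n).2 + 1), ?_, le_of_eq h1', h2'⟩
                rw [hstep n]; right; right; rfl
              · exact absurd (Prod.ext h1' h2') hij
        · exact Or.inr ⟨p, by rw [hstep n]; exact Or.inl ⟨hp, hpe⟩, h1, h2⟩
  constructor
  · intro m n hmn
    induction n with
    | zero => simp_all
    | succ n ih =>
      rcases Nat.lt_succ_iff_lt_or_eq.mp (Nat.lt_succ_of_le hmn) with h | h
      · exact le_trans (ih (Nat.lt_succ_iff.mp h)) (step1 n)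
      · rw [h]
  · intro n i j hi hj hnot
    rcases key n i j hi hj with ⟨m, hm, hpm⟩ | ⟨p, hp, h1, h2⟩
    · exact absurd hpm (hnot m (le_of_lt hm))
    · exact le_trans (hmin n p hp) (add_le_add (hA h1) (hB h2))
end

section
/- The exact heuristic H₁(q₁ ⤳ q₂ : u) = β(q₁ ⤳ q₂) ⊗ u over a commutative semiring with the path property is both admissible (H₁(s ⤳ f : w) = w) and monotonic with respect to the Scan and Complete inference rules of L_M. -/
section Aux

variable {Q T A P K : Type*}

theorem isPath_append_s17 {src dst : T → Q} {q r r' : Q} {π₁ π₂ : List T}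
    (h1 : IsPath src dst q π₁ r) (h2 : IsPath src dst r π₂ r') :
    IsPath src dst q (π₁ ++ π₂) r' := by
  induction h1 with
  | nil => simpa using h2
  | cons h _ ih => exact .cons h (ih h2)

variable [CommSemiring K] {src dst : T → Q} {lab : T → Option (A ⊕ (Bool × P))}
  {wt : T → K} {s : Q}

theorem pf_isPath : ∀ {q₁ q₂ : Q} {u : K} (pf : Pf src dst lab wt s q₁ q₂ u),
    IsPath src dst q₁ (inducedPath pf) q₂
  | _, _, _, .ax q _ => .nil q
  | _, _, _, .scan pf e hsrc _ =>
      isPath_append_s17 (pf_isPath pf) (.cons hsrc (.nil _))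
  | _, _, _, .complete _ pf₁ e₁ h₁s _ pf₂ e₂ h₂s _ =>
      isPath_append_s17 (pf_isPath pf₁)
        (.cons h₁s (isPath_append_s17 (pf_isPath pf₂) (.cons h₂s (.nil _))))

theorem pf_balanced : ∀ {q₁ q₂ : Q} {u : K} (pf : Pf src dst lab wt s q₁ q₂ u),
    BalancedP lab (inducedPath pf)
  | _, _, _, .ax _ _ => Dyck.nil
  | _, _, _, .scan pf e _ hlab => by
      have he : parenOf (lab e) = none := by
        cases h : lab e with
        | none => rfl
        | some x =>
          cases x with
          | inl a => rfl
          | inr p => exact absurd h (hlab p)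
      have := pf_balanced pf
      unfold BalancedP parens at this ⊢
      simpa [inducedPath, List.filterMap_append, he] using this
  | _, _, _, .complete a pf₁ e₁ _ h₁ pf₂ e₂ _ h₂ => by
      have hb₁ := pf_balanced pf₁
      have hb₂ := pf_balanced pf₂
      unfold BalancedP parens at hb₁ hb₂ ⊢
      have : (inducedPath (.complete a pf₁ e₁ ‹_› h₁ pf₂ e₂ ‹_› h₂ :
          Pf src dst lab wt s _ _ _)).filterMap (fun e => parenOf (lab e)) =
          ((inducedPath pf₁).filterMap (fun e => parenOf (lab e))) ++
          ((false, a) :: ((inducedPath pf₂).filterMap (fun e => parenOf (lab e))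
            ++ [(true, a)])) := by
        simp [inducedPath, List.filterMap_append, parenOf, h₁, h₂]
      rw [this]
      exact Dyck.append hb₁ (Dyck.wrap a hb₂)

theorem pf_weight : ∀ {q₁ q₂ : Q} {u : K} (pf : Pf src dst lab wt s q₁ q₂ u),
    pweight wt (inducedPath pf) = u
  | _, _, _, .ax _ _ => by simp [pweight, inducedPath]
  | _, _, _, .scan pf e _ _ => by
      have := pf_weight pf
      simp [pweight, inducedPath] at this ⊢
      rw [this]
  | _, _, _, .complete a pf₁ e₁ _ _ pf₂ e₂ _ _ => by
      have h1 := pf_weight pf₁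
      have h2 := pf_weight pf₂
      simp [pweight, inducedPath] at h1 h2 ⊢
      rw [h1, h2]; ring

theorem sum_subset_add {ι : Type*} (hid : ∀ a : K, a + a = a)
    {s t : Finset ι} (g : ι → K) (h : t ⊆ s) :
    s.sum g + t.sum g = s.sum g := by
  classical
  rw [← Finset.sum_sdiff h, add_assoc, hid]

/-- The key combinatorial step shared by all monotonicity goals. -/
theorem mono_key (hid : ∀ a : K, a + a = a)
    (C₁ C₂ : Finset (List T × List T)) (wt : T → K) (u v : K)
    (φ : List T × List T → List T × List T)
    (hinj : Function.Injective φ)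
    (hsub : ∀ x ∈ C₂, φ x ∈ C₁)
    (hterm : ∀ x ∈ C₂, pweight wt (φ x).1 * pweight wt (φ x).2 * u =
      pweight wt x.1 * pweight wt x.2 * v) :
    (∑ μν ∈ C₁, pweight wt μν.1 * pweight wt μν.2) * u +
      (∑ μν ∈ C₂, pweight wt μν.1 * pweight wt μν.2) * v =
    (∑ μν ∈ C₁, pweight wt μν.1 * pweight wt μν.2) * u := by
  classical
  rw [Finset.sum_mul, Finset.sum_mul]
  have h2 : (∑ μν ∈ C₂, pweight wt μν.1 * pweight wt μν.2 * v) =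
      ∑ μν ∈ C₂.image φ, pweight wt μν.1 * pweight wt μν.2 * u := by
    rw [Finset.sum_image (fun x _ y _ h => hinj h)]
    exact (Finset.sum_congr rfl hterm).symm
  rw [h2]
  exact sum_subset_add hid _ (fun x hx => by
    obtain ⟨y, hy, rfl⟩ := Finset.mem_image.mp hx
    exact hsub y hy)

end Aux

/-- the exact heuristic `H₁(q₁ ⤳ q₂ : u) = β(q₁ ⤳ q₂) ⊗ u`, over a
commutative semiring with the path property, is admissible (H₁(s ⤳ f : w) = w) and
monotonic with respect to the Scan and Complete rules of L_M (H₁ of each antecedent is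
≤ H₁ of the conclusion in the natural order `a ≤ b ↔ a ⊕ b = a`).

Here `β(q₁ ⤳ q₂)` is the ⊕-sum, over all prefix/suffix pairs (μ, ν) completing a
balanced path π induced by an instantiation of q₁ ⤳ q₂ to an accepting path μπν
(a finite set `Cpl q₁ q₂`), of `w[μ] ⊗ w[ν]`; in particular β(s ⤳ f) = 1̄. -/
theorem H1_admissible_and_monotonic {Q T A P K : Type*} [CommSemiring K]
    (hpath : ∀ a b : K, a + b = a ∨ a + b = b)
    (src dst : T → Q) (lab : T → Option (A ⊕ (Bool × P))) (wt : T → K) (s f : Q)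
    (Cpl : Q → Q → Finset (List T × List T))
    (hCpl : ∀ (q₁ q₂ : Q) (π : List T), IsPath src dst q₁ π q₂ → BalancedP lab π →
      ∀ μν : List T × List T, μν ∈ Cpl q₁ q₂ ↔
        (IsPath src dst s (μν.1 ++ π ++ μν.2) f ∧
          BalancedP lab (μν.1 ++ π ++ μν.2)))
    (β : Q → Q → K)
    (hβ : ∀ q₁ q₂, β q₁ q₂ = ∑ μν ∈ Cpl q₁ q₂, pweight wt μν.1 * pweight wt μν.2)
    (hβsf : β s f = 1) :
    -- admissibility
    ((∀ (w : K), Pf src dst lab wt s s f w → β s f * w = w) ∧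
    -- monotonicity for the Scan rule
    (∀ (q r : Q) (u : K), Pf src dst lab wt s q r u →
      ∀ e : T, src e = r → (∀ x : Bool × P, lab e ≠ some (Sum.inr x)) →
        β q r * u + β q (dst e) * (u * wt e) = β q r * u) ∧
    -- monotonicity for the Complete rule (both antecedents)
    (∀ (q r r' : Q) (u₁ u₂ : K) (a : P),
      Pf src dst lab wt s q r u₁ →
      ∀ e₁ : T, src e₁ = r → lab e₁ = some (Sum.inr (false, a)) →
      Pf src dst lab wt s (dst e₁) r' u₂ →
      ∀ e₂ : T, src e₂ = r' → lab e₂ = some (Sum.inr (true, a)) →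
        (β q r * u₁ + β q (dst e₂) * (u₁ * wt e₁ * u₂ * wt e₂) = β q r * u₁) ∧
        (β (dst e₁) r' * u₂ + β q (dst e₂) * (u₁ * wt e₁ * u₂ * wt e₂) =
          β (dst e₁) r' * u₂))) := by
  classical
  have hid : ∀ a : K, a + a = a := fun a => by rcases hpath a a with h | h <;> exact h
  refine ⟨fun w _ => by rw [hβsf, one_mul], ?_, ?_⟩
  · -- Scan
    intro q r u pf e hsrc hlab
    have hp : IsPath src dst q (inducedPath pf) r := pf_isPath pf
    have hb : BalancedP lab (inducedPath pf) := pf_balanced pf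
    have hp' : IsPath src dst q (inducedPath pf ++ [e]) (dst e) :=
      isPath_append_s17 hp (.cons hsrc (.nil _))
    have hb' : BalancedP lab (inducedPath pf ++ [e]) :=
      pf_balanced (.scan pf e hsrc hlab)
    rw [hβ q r, hβ q (dst e)]
    refine mono_key hid _ _ wt u (u * wt e) (fun μν => (μν.1, e :: μν.2))
      (fun x y h => by
        cases x; cases y
        simpa using h)
      (fun x hx => ?_) (fun x hx => ?_)
    · have hacc := (hCpl q (dst e) _ hp' hb' x).mp hx
      refine (hCpl q r _ hp hb _).mpr ⟨?_, ?_⟩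
      · have := hacc.1
        simpa [List.append_assoc] using this
      · have := hacc.2
        simpa [BalancedP, List.append_assoc] using this
    · simp only [pweight, List.map_cons, List.prod_cons, List.map_nil, List.prod_nil]
      ring
  · -- Complete
    intro q r r' u₁ u₂ a pf₁ e₁ h₁s h₁ pf₂ e₂ h₂s h₂
    have hp₁ : IsPath src dst q (inducedPath pf₁) r := pf_isPath pf₁
    have hb₁ : BalancedP lab (inducedPath pf₁) := pf_balanced pf₁
    have hp₂ : IsPath src dst (dst e₁) (inducedPath pf₂) r' := pf_isPath pf₂
    have hb₂ : BalancedP lab (inducedPath pf₂) := pf_balanced pf₂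
    have hpc : IsPath src dst q
        (inducedPath pf₁ ++ e₁ :: (inducedPath pf₂ ++ [e₂])) (dst e₂) :=
      isPath_append_s17 hp₁ (.cons h₁s (isPath_append_s17 hp₂ (.cons h₂s (.nil _))))
    have hbc : BalancedP lab (inducedPath pf₁ ++ e₁ :: (inducedPath pf₂ ++ [e₂])) :=
      pf_balanced (.complete a pf₁ e₁ h₁s h₁ pf₂ e₂ h₂s h₂)
    have hw₂ : pweight wt (inducedPath pf₂) = u₂ := pf_weight pf₂
    have hw₁ : pweight wt (inducedPath pf₁) = u₁ := pf_weight pf₁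
    constructor
    · rw [hβ q r, hβ q (dst e₂)]
      refine mono_key hid _ _ wt u₁ (u₁ * wt e₁ * u₂ * wt e₂)
        (fun μν => (μν.1, e₁ :: (inducedPath pf₂ ++ e₂ :: μν.2)))
        (fun x y h => by
          cases x; cases y
          simpa using h)
        (fun x hx => ?_) (fun x hx => ?_)
      · have hacc := (hCpl q (dst e₂) _ hpc hbc x).mp hx
        refine (hCpl q r _ hp₁ hb₁ _).mpr ⟨?_, ?_⟩
        · have := hacc.1
          simpa [List.append_assoc] using this
        · have := hacc.2
          simpa [BalancedP, List.append_assoc] using this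
      · simp only [pweight, List.map_cons, List.prod_cons, List.map_nil, List.prod_nil, List.map_append,
          List.prod_append] at hw₂ ⊢
        rw [hw₂]
        ring
    · rw [hβ (dst e₁) r', hβ q (dst e₂)]
      refine mono_key hid _ _ wt u₂ (u₁ * wt e₁ * u₂ * wt e₂)
        (fun μν => (μν.1 ++ inducedPath pf₁ ++ [e₁], e₂ :: μν.2))
        (fun x y h => by
          cases x; cases y
          simp only [Prod.mk.injEq, List.cons.injEq] at h
          have := List.append_cancel_right (List.append_cancel_right h.1)
          simp_all)
        (fun x hx => ?_) (fun x hx => ?_)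
      · have hacc := (hCpl q (dst e₂) _ hpc hbc x).mp hx
        refine (hCpl (dst e₁) r' _ hp₂ hb₂ _).mpr ⟨?_, ?_⟩
        · have := hacc.1
          simpa [List.append_assoc] using this
        · have := hacc.2
          simpa [BalancedP, List.append_assoc] using this
      · simp only [pweight, List.map_cons, List.prod_cons, List.map_nil, List.prod_nil, List.map_append,
          List.prod_append] at hw₁ hw₂ ⊢
        rw [hw₁]
        ring
end

section
/- In the tropical semiring with non-negative weights, the heuristic H₂(q₁ ⤳ q₂ : u) = u ⊗ γ(q₁ ⤳ q₂), where γ(q₁ ⤳ q₂) is the ⊕-sum of shortest distances D(q₂, q₃) over all exiting states q₃ reachable from q₂, is admissible and monotonic for the deduction system L_M. -/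
open scoped ENNReal

/-- The tropical weight of a path: the sum of its transition weights. -/
noncomputable def tweight {T : Type*} (wt : T → ℝ≥0∞) (π : List T) : ℝ≥0∞ := (π.map wt).sum

/-- The shortest distance `D p q` between states (∞ if there is no path). -/
noncomputable def D {Q T : Type*} (src dst : T → Q) (wt : T → ℝ≥0∞) (p q : Q) :
    ℝ≥0∞ :=
  ⨅ π : {π : List T // IsPath src dst p π q}, tweight wt π.val

/-- Exiting states (relative to the left state q₁ of an item): states with an
outgoing closing-parenthesis transition, or `f` when q₁ = s. -/
def Exiting {Q T A P : Type*} (src : T → Q) (lab : T → Option (A ⊕ (Bool × P)))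
    (s f : Q) (q₁ q : Q) : Prop :=
  (∃ (e : T) (a : P), src e = q ∧ lab e = some (Sum.inr (true, a))) ∨
    (q₁ = s ∧ q = f)

/-- `γ(q₁ ⤳ q₂)`: the ⊕-sum (minimum) of the shortest distances `D q₂ q₃` over all
exiting states q₃ reachable from q₂. -/
noncomputable def gammaH {Q T A P : Type*} (src dst : T → Q)
    (lab : T → Option (A ⊕ (Bool × P))) (wt : T → ℝ≥0∞) (s f : Q) (q₁ q₂ : Q) :
    ℝ≥0∞ :=
  ⨅ q₃ : {q₃ : Q // Exiting src lab s f q₁ q₃ ∧ D src dst wt q₂ q₃ ≠ ∞},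
    D src dst wt q₂ q₃.val

/-- Proofs in the logic L_M over the tropical semiring (⊗ is +, 1̄ is 0). -/
inductive PfT {Q T A P : Type*} (src dst : T → Q)
    (lab : T → Option (A ⊕ (Bool × P))) (wt : T → ℝ≥0∞) (s : Q) :
    Q → Q → ℝ≥0∞ → Type _
  | ax (q : Q) (h : Entering dst lab s q) : PfT src dst lab wt s q q 0
  | scan {q r : Q} {u : ℝ≥0∞} (pf : PfT src dst lab wt s q r u) (e : T)
      (hsrc : src e = r) (hlab : ∀ x : Bool × P, lab e ≠ some (Sum.inr x)) :
      PfT src dst lab wt s q (dst e) (u + wt e)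
  | complete {q r r' : Q} {u₁ u₂ : ℝ≥0∞} (a : P)
      (pf₁ : PfT src dst lab wt s q r u₁) (e₁ : T)
      (h₁s : src e₁ = r) (h₁ : lab e₁ = some (Sum.inr (false, a)))
      (pf₂ : PfT src dst lab wt s (dst e₁) r' u₂) (e₂ : T)
      (h₂s : src e₂ = r') (h₂ : lab e₂ = some (Sum.inr (true, a))) :
      PfT src dst lab wt s q (dst e₂) (u₁ + wt e₁ + u₂ + wt e₂)

section Aux

variable {Q T A P : Type*} (src dst : T → Q) (lab : T → Option (A ⊕ (Bool × P)))
  (wt : T → ℝ≥0∞) (s f : Q)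

lemma IsPath.append_s18 {p q r : Q} {π ρ : List T} (h₁ : IsPath src dst p π q)
    (h₂ : IsPath src dst q ρ r) : IsPath src dst p (π ++ ρ) r := by
  induction h₁ with
  | nil => simpa using h₂
  | cons h hp ih => exact IsPath.cons h (ih h₂)

lemma tweight_append (π ρ : List T) :
    tweight wt (π ++ ρ) = tweight wt π + tweight wt ρ := by
  simp [tweight]

lemma D_le_tweight {p q : Q} {π : List T} (h : IsPath src dst p π q) :
    D src dst wt p q ≤ tweight wt π :=
  iInf_le (fun π : {π : List T // IsPath src dst p π q} => tweight wt π.val) ⟨π, h⟩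

lemma D_self_eq_zero (q : Q) : D src dst wt q q = 0 :=
  le_antisymm (by simpa [tweight] using D_le_tweight src dst wt (IsPath.nil (src := src) (dst := dst) q)) (zero_le)

lemma D_triangle (p q r : Q) :
    D src dst wt p r ≤ D src dst wt p q + D src dst wt q r := by
  rw [D, D, D, ENNReal.iInf_add]
  refine le_iInf fun π => ?_
  rw [ENNReal.add_iInf]
  refine le_iInf fun ρ => ?_
  calc D src dst wt p r ≤ tweight wt (π.val ++ ρ.val) :=
        D_le_tweight src dst wt (π.2.append_s18 src dst ρ.2)
    _ = tweight wt π.val + tweight wt ρ.val := tweight_append wt _ _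

lemma gammaH_le {q₁ q₂ q₃ : Q} (hex : Exiting src lab s f q₁ q₃)
    (hfin : D src dst wt q₂ q₃ ≠ ∞) :
    gammaH src dst lab wt s f q₁ q₂ ≤ D src dst wt q₂ q₃ :=
  iInf_le (fun q₃ : {q₃ : Q // Exiting src lab s f q₁ q₃ ∧ D src dst wt q₂ q₃ ≠ ∞} =>
    D src dst wt q₂ q₃.val) ⟨q₃, hex, hfin⟩

/-- Key monotonicity lemma: if `D r q₃ ≤ c + D q₂' q₃` for every state `q₃`,
then `γ(q₁ ⤳ r) ≤ c + γ(q₁ ⤳ q₂')`. -/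
lemma gammaH_mono {q₁ r q₂' : Q} {c : ℝ≥0∞}
    (h : ∀ q₃ : Q, D src dst wt r q₃ ≤ c + D src dst wt q₂' q₃) :
    gammaH src dst lab wt s f q₁ r ≤ c + gammaH src dst lab wt s f q₁ q₂' := by
  rw [gammaH, gammaH, ENNReal.add_iInf]
  refine le_iInf fun ⟨q₃, hex, hfin⟩ => ?_
  by_cases hc : c + D src dst wt q₂' q₃ = ∞
  · rw [hc]; exact le_top
  · refine le_trans (gammaH_le src dst lab wt s f hex ?_) (h q₃)
    exact fun hinf => hc (top_le_iff.mp (hinf ▸ h q₃))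

/-- Every proved item `q ⤳ r : u` corresponds to a path from `q` to `r` of
weight exactly `u`. -/
lemma PfT_to_path {q r : Q} {u : ℝ≥0∞} (pf : PfT src dst lab wt s q r u) :
    ∃ π : List T, IsPath src dst q π r ∧ tweight wt π = u := by
  induction pf with
  | ax q h => exact ⟨[], IsPath.nil q, by simp [tweight]⟩
  | scan pf e hsrc hlab ih =>
    obtain ⟨π, hπ, hw⟩ := ih
    refine ⟨π ++ [e], hπ.append_s18 src dst (IsPath.cons hsrc (IsPath.nil _)), ?_⟩
    rw [tweight_append, hw]; simp [tweight]
  | complete a pf₁ e₁ h₁s h₁ pf₂ e₂ h₂s h₂ ih₁ ih₂ =>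
    obtain ⟨π₁, hπ₁, hw₁⟩ := ih₁
    obtain ⟨π₂, hπ₂, hw₂⟩ := ih₂
    refine ⟨π₁ ++ (e₁ :: (π₂ ++ [e₂])),
      hπ₁.append_s18 src dst (IsPath.cons h₁s
        (hπ₂.append_s18 src dst (IsPath.cons h₂s (IsPath.nil _)))), ?_⟩
    rw [tweight_append, hw₁]
    simp [tweight, hw₂, ← hw₂]
    ring

lemma D_le_PfT {q r : Q} {u : ℝ≥0∞} (pf : PfT src dst lab wt s q r u) :
    D src dst wt q r ≤ u := by
  obtain ⟨π, hπ, hw⟩ := PfT_to_path src dst lab wt s pf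
  exact hw ▸ D_le_tweight src dst wt hπ

end Aux

/-- in the tropical semiring with non-negative weights, the heuristic
`H₂(q₁ ⤳ q₂ : u) = u ⊗ γ(q₁ ⤳ q₂)` is admissible (`H₂(s ⤳ f : w) = w`) and
monotonic for the deduction system L_M (H₂ of each antecedent is ≤ H₂ of the
conclusion for every Scan and Complete rule application). -/
theorem H2_admissible_and_monotonic {Q T A P : Type*}
    (src dst : T → Q) (lab : T → Option (A ⊕ (Bool × P))) (wt : T → ℝ≥0∞)
    (s f : Q) :
    -- admissibility
    ((∀ w : ℝ≥0∞, PfT src dst lab wt s s f w →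
        w + gammaH src dst lab wt s f s f = w) ∧
    -- monotonicity for the Scan rule
    (∀ (q r : Q) (u : ℝ≥0∞), PfT src dst lab wt s q r u →
      ∀ e : T, src e = r → (∀ x : Bool × P, lab e ≠ some (Sum.inr x)) →
        u + gammaH src dst lab wt s f q r ≤
          (u + wt e) + gammaH src dst lab wt s f q (dst e)) ∧
    -- monotonicity for the Complete rule (both antecedents)
    (∀ (q r r' : Q) (u₁ u₂ : ℝ≥0∞) (a : P),
      PfT src dst lab wt s q r u₁ →
      ∀ e₁ : T, src e₁ = r → lab e₁ = some (Sum.inr (false, a)) →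
      PfT src dst lab wt s (dst e₁) r' u₂ →
      ∀ e₂ : T, src e₂ = r' → lab e₂ = some (Sum.inr (true, a)) →
        (u₁ + gammaH src dst lab wt s f q r ≤
          (u₁ + wt e₁ + u₂ + wt e₂) + gammaH src dst lab wt s f q (dst e₂)) ∧
        (u₂ + gammaH src dst lab wt s f (dst e₁) r' ≤
          (u₁ + wt e₁ + u₂ + wt e₂) + gammaH src dst lab wt s f q (dst e₂)))) := by
  have hDself := D_self_eq_zero src dst wt
  refine ⟨?_, ?_, ?_⟩
  · -- admissibility
    intro w _
    have hγ : gammaH src dst lab wt s f s f = 0 := by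
      refine le_antisymm ?_ (zero_le)
      have := gammaH_le src dst lab wt s f (q₂ := f)
        (Or.inr ⟨rfl, rfl⟩ : Exiting src lab s f s f) (by simp [hDself f])
      simpa [hDself f] using this
    rw [hγ, add_zero]
  · -- Scan
    intro q r u _ e hsrc _
    rw [add_assoc]
    refine add_le_add_right ?_ u
    refine gammaH_mono src dst lab wt s f fun q₃ => ?_
    calc D src dst wt r q₃
        ≤ D src dst wt r (dst e) + D src dst wt (dst e) q₃ :=
          D_triangle src dst wt r (dst e) q₃
      _ ≤ wt e + D src dst wt (dst e) q₃ := by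
          refine add_le_add_left ?_ _
          simpa [tweight] using
            D_le_tweight src dst wt (IsPath.cons hsrc (IsPath.nil (dst e)))
  · -- Complete
    intro q r r' u₁ u₂ a _ e₁ h₁s h₁ pf₂ e₂ h₂s h₂
    constructor
    · -- first antecedent
      have hkey : gammaH src dst lab wt s f q r ≤
          (wt e₁ + u₂ + wt e₂) + gammaH src dst lab wt s f q (dst e₂) := by
        refine gammaH_mono src dst lab wt s f fun q₃ => ?_
        have hpath : D src dst wt r (dst e₂) ≤ wt e₁ + u₂ + wt e₂ := by
          obtain ⟨π₂, hπ₂, hw₂⟩ := PfT_to_path src dst lab wt s pf₂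
          have : IsPath src dst r (e₁ :: (π₂ ++ [e₂])) (dst e₂) :=
            IsPath.cons h₁s (hπ₂.append_s18 src dst (IsPath.cons h₂s (IsPath.nil _)))
          refine le_trans (D_le_tweight src dst wt this) ?_
          simp [tweight, ← hw₂]
          ring_nf
          rfl
        calc D src dst wt r q₃
            ≤ D src dst wt r (dst e₂) + D src dst wt (dst e₂) q₃ :=
              D_triangle src dst wt r (dst e₂) q₃
          _ ≤ (wt e₁ + u₂ + wt e₂) + D src dst wt (dst e₂) q₃ :=
              add_le_add_left hpath _
      calc u₁ + gammaH src dst lab wt s f q r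
          ≤ u₁ + ((wt e₁ + u₂ + wt e₂) + gammaH src dst lab wt s f q (dst e₂)) :=
            add_le_add_right hkey u₁
        _ = (u₁ + wt e₁ + u₂ + wt e₂) + gammaH src dst lab wt s f q (dst e₂) := by
            ring
    · -- second antecedent
      have hγ : gammaH src dst lab wt s f (dst e₁) r' = 0 := by
        refine le_antisymm ?_ (zero_le)
        have := gammaH_le src dst lab wt s f (q₂ := r')
          (Or.inl ⟨e₂, a, h₂s, h₂⟩ : Exiting src lab s f (dst e₁) r')
          (by simp [hDself r'])
        simpa [hDself r'] using this
      rw [hγ, add_zero]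
      calc u₂ ≤ u₁ + wt e₁ + u₂ + wt e₂ := by
            calc u₂ ≤ u₁ + wt e₁ + u₂ := le_add_self
              _ ≤ u₁ + wt e₁ + u₂ + wt e₂ := le_self_add
        _ ≤ (u₁ + wt e₁ + u₂ + wt e₂) + gammaH src dst lab wt s f q (dst e₂) :=
            le_self_add
end
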